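/- arXiv:2009.11618 — 13 statements merged into one kernel-verified Lean document; each statement's English description precedes it below -/
import Mathlib

section
/- Let (R, ·, A) be an averaging algebra over a field k. Then the two binary operations on R defined by x ⋆ y := x·A(y) and x ◇ y := A(x)·y are both associative. -/
/-- In an averaging algebra `(R, ·, A)` over a field `k`, the operations
`x ⋆ y := x · A y` and `x ◇ y := A x · y` are both associative. -/
theorem averaging_star_diamond_assoc
    (k : Type*) [Field k] (R : Type*) [Ring R] [Algebra k R]
    (A : R →ₗ[k] R)
    (havg1 : ∀ x y : R, A x * A y = A (x * A y))
    (havg2 : ∀ x y : R, A x * A y = A (A x * y)) :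
    (∀ x y z : R, (x * A y) * A z = x * A (y * A z)) ∧
    (∀ x y z : R, A (A x * y) * z = A x * (A y * z)) := by
  constructor
  · intro x y z
    rw [mul_assoc, havg1]
  · intro x y z
    rw [← havg2, mul_assoc]
end

section
/- Let (R, ·, A) be an averaging algebra over a field k and let x ⋆ y := x·A(y). Then (R, ⋆, A) is again an averaging algebra, i.e., ⋆ is associative and A(x) ⋆ A(y) = A(x ⋆ A(y)) = A(A(x) ⋆ y) for all x, y ∈ R. -/
/-- If `(R, ·, A)` is an averaging algebra and `x ⋆ y := x · A y`,
then `(R, ⋆, A)` is again an averaging algebra. -/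
theorem star_averaging_algebra
    (k : Type*) [Field k] (R : Type*) [Ring R] [Algebra k R]
    (A : R →ₗ[k] R)
    (havg1 : ∀ x y : R, A x * A y = A (x * A y))
    (havg2 : ∀ x y : R, A x * A y = A (A x * y)) :
    (∀ x y z : R, (x * A y) * A z = x * A (y * A z)) ∧
    (∀ x y : R, A x * A (A y) = A (x * A (A y)) ∧ A x * A (A y) = A (A x * A y)) := by
  refine ⟨fun x y z => by rw [mul_assoc, havg1], fun x y => ⟨by rw [havg1], by rw [havg2]⟩⟩
end

section
/- Let (R, ·, A) be an averaging algebra over a field k and (M, A_M) a bimodule over (R, ·, A). Define a ⊢ m := A(a)m − A_M(am) and m ⊣ a := mA(a) for a ∈ R, m ∈ M, and let a ⋆ b := aA(b). Then (⊢, ⊣) makes M into a bimodule over the associative algebra (R, ⋆); explicitly, for all a, b ∈ R and m ∈ M: (a ⋆ b) ⊢ m = a ⊢ (b ⊢ m), m ⊣ (a ⋆ b) = (m ⊣ a) ⊣ b, and (a ⊢ m) ⊣ b = a ⊢ (m ⊣ b). -/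
/-- For an averaging algebra `(R, ·, A)` and a bimodule `(M, A_M)` over it,
the actions `a ⊢ m := A(a)m − A_M(am)` and `m ⊣ a := mA(a)` make `M` a bimodule over
the associative algebra `(R, ⋆)` where `a ⋆ b := a·A(b)`. -/
theorem star_bimodule_structure
    (k : Type*) [Field k] (R : Type*) [Ring R] [Algebra k R]
    (M : Type*) [AddCommGroup M] [Module k M]
    (A : R →ₗ[k] R) (B : M →ₗ[k] M)
    (l : R →ₗ[k] M →ₗ[k] M) (rr : M →ₗ[k] R →ₗ[k] M)
    -- `(R, ·, A)` is an averaging algebra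
    (havg1 : ∀ x y : R, A x * A y = A (x * A y))
    (havg2 : ∀ x y : R, A x * A y = A (A x * y))
    -- `M` is an `R`-bimodule via `l` (left action) and `rr` (right action)
    (hbl : ∀ (a b : R) (m : M), l (a * b) m = l a (l b m))
    (hbr : ∀ (a b : R) (m : M), rr m (a * b) = rr (rr m a) b)
    (hblr : ∀ (a b : R) (m : M), rr (l a m) b = l a (rr m b))
    -- `(M, B)` is a bimodule over the averaging algebra `(R, ·, A)`
    (hAl1 : ∀ (r : R) (m : M), l (A r) (B m) = B (l (A r) m))
    (hAl2 : ∀ (r : R) (m : M), l (A r) (B m) = B (l r (B m)))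
    (hAr1 : ∀ (r : R) (m : M), rr (B m) (A r) = B (rr (B m) r))
    (hAr2 : ∀ (r : R) (m : M), rr (B m) (A r) = B (rr m (A r)))
    -- the new actions: `a ⊢ m = A(a)m − A_M(am)` and `m ⊣ a = mA(a)`
    (vd : R → M → M) (hvd : ∀ a m, vd a m = l (A a) m - B (l a m))
    (dv : M → R → M) (hdv : ∀ m a, dv m a = rr m (A a)) :
    (∀ (a b : R) (m : M), vd (a * A b) m = vd a (vd b m)) ∧
    (∀ (a b : R) (m : M), dv m (a * A b) = dv (dv m a) b) ∧
    (∀ (a b : R) (m : M), dv (vd a m) b = vd a (dv m b)) := by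
  refine ⟨fun a b m => ?_, fun a b m => ?_, fun a b m => ?_⟩
  · simp only [hvd, ← havg1, hbl, hAl2 a (l b m), map_sub, LinearMap.sub_apply]
    abel
  · simp only [hdv, ← havg1, hbr]
  · simp only [hvd, hdv, map_sub, LinearMap.sub_apply, hblr, hAr2]
end

section
/- Let (R, ·, A) be an averaging algebra over a field k and (M, A_M) a bimodule over (R, ·, A). Define a ▷ m := A(a)m and m ◁ a := mA(a) − A_M(ma) for a ∈ R, m ∈ M, and let a ◇ b := A(a)b. Then (▷, ◁) makes M into a bimodule over the associative algebra (R, ◇); explicitly, for all a, b ∈ R and m ∈ M: (a ◇ b) ▷ m = a ▷ (b ▷ m), m ◁ (a ◇ b) = (m ◁ a) ◁ b, and (a ▷ m) ◁ b = a ▷ (m ◁ b). -/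
/-- For an averaging algebra `(R, ·, A)` and a bimodule `(M, A_M)` over it,
the actions `a ▷ m := A(a)m` and `m ◁ a := mA(a) − A_M(ma)` make `M` a bimodule over
the associative algebra `(R, ◇)` where `a ◇ b := A(a)·b`. -/
theorem diamond_bimodule_structure
    (k : Type*) [Field k] (R : Type*) [Ring R] [Algebra k R]
    (M : Type*) [AddCommGroup M] [Module k M]
    (A : R →ₗ[k] R) (B : M →ₗ[k] M)
    (l : R →ₗ[k] M →ₗ[k] M) (rr : M →ₗ[k] R →ₗ[k] M)
    -- `(R, ·, A)` is an averaging algebra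
    (havg1 : ∀ x y : R, A x * A y = A (x * A y))
    (havg2 : ∀ x y : R, A x * A y = A (A x * y))
    -- `M` is an `R`-bimodule via `l` (left action) and `rr` (right action)
    (hbl : ∀ (a b : R) (m : M), l (a * b) m = l a (l b m))
    (hbr : ∀ (a b : R) (m : M), rr m (a * b) = rr (rr m a) b)
    (hblr : ∀ (a b : R) (m : M), rr (l a m) b = l a (rr m b))
    -- `(M, B)` is a bimodule over the averaging algebra `(R, ·, A)`
    (hAl1 : ∀ (r : R) (m : M), l (A r) (B m) = B (l (A r) m))
    (hAl2 : ∀ (r : R) (m : M), l (A r) (B m) = B (l r (B m)))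
    (hAr1 : ∀ (r : R) (m : M), rr (B m) (A r) = B (rr (B m) r))
    (hAr2 : ∀ (r : R) (m : M), rr (B m) (A r) = B (rr m (A r)))
    -- the new actions: `a ▷ m = A(a)m` and `m ◁ a = mA(a) − A_M(ma)`
    (td : R → M → M) (htd : ∀ a m, td a m = l (A a) m)
    (lt : M → R → M) (hlt : ∀ m a, lt m a = rr m (A a) - B (rr m a)) :
    (∀ (a b : R) (m : M), td (A a * b) m = td a (td b m)) ∧
    (∀ (a b : R) (m : M), lt m (A a * b) = lt (lt m a) b) ∧
    (∀ (a b : R) (m : M), lt (td a m) b = td a (lt m b)) := by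
  refine ⟨fun a b m => ?_, fun a b m => ?_, fun a b m => ?_⟩
  · rw [htd, htd, htd, ← havg2, hbl]
  · simp only [hlt, ← havg2, hbr]
    simp only [map_sub, LinearMap.sub_apply, hAr1 b ((rr m) a)]
    abel
  · rw [htd, hlt, hlt, htd, hblr, hblr, map_sub, hAl1]
end

section
/- Let (R, ·, A) be an averaging algebra over a field k and (M, A_M) a bimodule over (R, ·, A). Fix m ∈ M and define the k-linear map g : R → M by g(r) := A_M(mr) − A_M(rm) − mA(r) + A(r)m. Then for all x, y ∈ R: A(x)g(y) − A_M(x·g(y)) − g(xA(y)) + g(x)A(y) = 0 and A(x)g(y) − g(A(x)y) + g(x)A(y) − A_M(g(x)·y) = 0. -/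
/-- For an averaging algebra `(R, ·, A)`, a bimodule `(M, A_M)` over it and
a fixed `m ∈ M`, the map `g(r) := A_M(mr) − A_M(rm) − mA(r) + A(r)m` satisfies the two
degree-1 cocycle identities `∂_r g = 0` and `∂_l g = 0`. -/
theorem partial_zero_is_annihilated
    (k : Type*) [Field k] (R : Type*) [Ring R] [Algebra k R]
    (M : Type*) [AddCommGroup M] [Module k M]
    (A : R →ₗ[k] R) (B : M →ₗ[k] M)
    (l : R →ₗ[k] M →ₗ[k] M) (rr : M →ₗ[k] R →ₗ[k] M)
    -- `(R, ·, A)` is an averaging algebra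
    (havg1 : ∀ x y : R, A x * A y = A (x * A y))
    (havg2 : ∀ x y : R, A x * A y = A (A x * y))
    -- `M` is an `R`-bimodule via `l` (left action) and `rr` (right action)
    (hbl : ∀ (a b : R) (m : M), l (a * b) m = l a (l b m))
    (hbr : ∀ (a b : R) (m : M), rr m (a * b) = rr (rr m a) b)
    (hblr : ∀ (a b : R) (m : M), rr (l a m) b = l a (rr m b))
    -- `(M, B)` is a bimodule over the averaging algebra `(R, ·, A)`
    (hAl1 : ∀ (r : R) (m : M), l (A r) (B m) = B (l (A r) m))
    (hAl2 : ∀ (r : R) (m : M), l (A r) (B m) = B (l r (B m)))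
    (hAr1 : ∀ (r : R) (m : M), rr (B m) (A r) = B (rr (B m) r))
    (hAr2 : ∀ (r : R) (m : M), rr (B m) (A r) = B (rr m (A r)))
    -- the map `g = ∂_0(m₀)`
    (m₀ : M) (g : R → M)
    (hg : ∀ x : R, g x = B (rr m₀ x) - B (l x m₀) - rr m₀ (A x) + l (A x) m₀) :
    (∀ x y : R, l (A x) (g y) - B (l x (g y)) - g (x * A y) + rr (g x) (A y) = 0) ∧
    (∀ x y : R, l (A x) (g y) - g (A x * y) + rr (g x) (A y) - B (rr (g x) y) = 0) := by
  refine ⟨fun x y => ?_, fun x y => ?_⟩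
  · simp only [hg, map_sub, map_add, LinearMap.sub_apply, LinearMap.add_apply]
    try simp only [← hAl1, ← hAr1]
    try simp only [hAl2, hAr2]
    try simp only [hblr, ← hbr, ← hbl]
    try simp only [← havg1, ← havg2]
    abel
  · simp only [hg, map_sub, map_add, LinearMap.sub_apply, LinearMap.add_apply]
    try simp only [← hAl2, ← hAr1]
    try simp only [hAl1, hAr2]
    try simp only [hblr, ← hbr, ← hbl]
    try simp only [← havg1, ← havg2]
    abel
end

section
/- Let (R, ·, A) be an averaging algebra over a field k and (M, A_M) a bimodule over (R, ·, A). For every n ≥ 1 and every k-multilinear map f : R^n → M, one has Φ_r^{n+1}(δ f) = ∂_r(Φ_r^n f) as multilinear maps R^{n+1} → M. -/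
section

variable {k : Type*} [Field k] {R : Type*} [Ring R] [Algebra k R]
  {M : Type*} [AddCommGroup M] [Module k M]

/-- The Hochschild differential `δ` of an `n`-cochain, with coefficients given by
a left action `l` and a right action `rr`. -/
def hochschildDelta (l : R → M → M) (rr : M → R → M) {n : ℕ}
    (f : (Fin n → R) → M) : (Fin (n + 1) → R) → M := fun x =>
  l (x 0) (f (Fin.tail x))
    + ∑ i : Fin n, ((-1 : ℤ) ^ ((i : ℕ) + 1)) •
        f (fun j => if (j : ℕ) < (i : ℕ) then x (Fin.castSucc j)
            else if (j : ℕ) = (i : ℕ) then x (Fin.castSucc i) * x (Fin.succ i)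
            else x (Fin.succ j))
    + ((-1 : ℤ) ^ (n + 1)) • rr (f (Fin.init x)) (x (Fin.last n))

/-- The differential `∂_r` of the cochain complex `C_r^•(R,M)`. -/
def partialR (A : R → R) (B : M → M) (l : R → M → M) (rr : M → R → M) {n : ℕ}
    (f : (Fin n → R) → M) : (Fin (n + 1) → R) → M := fun x =>
  l (A (x 0)) (f (Fin.tail x)) - B (l (x 0) (f (Fin.tail x)))
    + ∑ i : Fin n, ((-1 : ℤ) ^ ((i : ℕ) + 1)) •
        f (fun j => if (j : ℕ) < (i : ℕ) then x (Fin.castSucc j)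
            else if (j : ℕ) = (i : ℕ) then x (Fin.castSucc i) * A (x (Fin.succ i))
            else x (Fin.succ j))
    + ((-1 : ℤ) ^ (n + 1)) • rr (f (Fin.init x)) (A (x (Fin.last n)))

/-- The map `Φ_r^n : C^n(R,M) → C_r^n(R,M)`,
`Φ_r^n(f)(x_1,…,x_n) = f(A x_1,…,A x_n) − A_M (f(x_1, A x_2,…,A x_n))`. -/
def phiR (A : R → R) (B : M → M) {n : ℕ}
    (f : (Fin n → R) → M) : (Fin n → R) → M := fun x =>
  f (fun i => A (x i)) - B (f (fun i => if (i : ℕ) = 0 then x i else A (x i)))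

/-- For an averaging algebra `(R, ·, A)`, a bimodule `(M, A_M)` over it,
`n ≥ 1` and a `k`-multilinear map `f : R^n → M`, one has
`Φ_r^{n+1}(δ f) = ∂_r(Φ_r^n f)`. -/
theorem phiR_chain_map
    (A : R →ₗ[k] R) (B : M →ₗ[k] M)
    (l : R →ₗ[k] M →ₗ[k] M) (rr : M →ₗ[k] R →ₗ[k] M)
    -- `(R, ·, A)` is an averaging algebra
    (havg1 : ∀ x y : R, A x * A y = A (x * A y))
    (havg2 : ∀ x y : R, A x * A y = A (A x * y))
    -- `M` is an `R`-bimodule via `l` and `rr`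
    (hbl : ∀ (a b : R) (m : M), l (a * b) m = l a (l b m))
    (hbr : ∀ (a b : R) (m : M), rr m (a * b) = rr (rr m a) b)
    (hblr : ∀ (a b : R) (m : M), rr (l a m) b = l a (rr m b))
    -- `(M, B)` is a bimodule over the averaging algebra `(R, ·, A)`
    (hAl1 : ∀ (r : R) (m : M), l (A r) (B m) = B (l (A r) m))
    (hAl2 : ∀ (r : R) (m : M), l (A r) (B m) = B (l r (B m)))
    (hAr1 : ∀ (r : R) (m : M), rr (B m) (A r) = B (rr (B m) r))
    (hAr2 : ∀ (r : R) (m : M), rr (B m) (A r) = B (rr m (A r)))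
    (n : ℕ) (hn : 1 ≤ n)
    (f : MultilinearMap k (fun _ : Fin n => R) M) :
    ∀ x : Fin (n + 1) → R,
      phiR A B (hochschildDelta (fun a m => l a m) (fun m a => rr m a) (⇑f)) x
        = partialR A B (fun a m => l a m) (fun m a => rr m a)
            (phiR A B (⇑f)) x := by
  intro x
  have hlast : ¬ ((Fin.last n : Fin (n+1)) : ℕ) = 0 := by simp; omega
  have ht1 : (Fin.tail fun i => A (x i)) = fun i : Fin n => A (x i.succ) := rfl
  have ht2 : (Fin.tail fun i : Fin (n+1) => if (i : ℕ) = 0 then x i else A (x i))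
      = fun i : Fin n => A (x i.succ) := by
    funext i; simp [Fin.tail]
  have hi1 : (Fin.init fun i => A (x i)) = fun i : Fin n => A (x i.castSucc) := rfl
  have hi2 : (Fin.init fun i : Fin (n+1) => if (i : ℕ) = 0 then x i else A (x i))
      = fun i : Fin n => if (i : ℕ) = 0 then x i.castSucc else A (x i.castSucc) := by
    funext i; simp [Fin.init]
  have hb : ∀ x_1 : Fin n,
      (fun j : Fin n =>
        if (j : ℕ) < (x_1 : ℕ) then (if (j : ℕ) = 0 then x j.castSucc else A (x j.castSucc))
        else if (j : ℕ) = (x_1 : ℕ) then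
          (if (x_1 : ℕ) = 0 then x x_1.castSucc else A (x x_1.castSucc)) * A (x x_1.succ)
        else A (x j.succ))
      = (fun i : Fin n =>
        if (i : ℕ) = 0 then
          (if (i : ℕ) < (x_1 : ℕ) then x i.castSucc
           else if (i : ℕ) = (x_1 : ℕ) then x x_1.castSucc * A (x x_1.succ) else x i.succ)
        else
          (if (i : ℕ) < (x_1 : ℕ) then A (x i.castSucc)
           else if (i : ℕ) = (x_1 : ℕ) then A (x x_1.castSucc * A (x x_1.succ))
           else A (x i.succ))) := by
    intro x_1
    funext j
    split_ifs <;> first | rfl | omega | rw [havg1]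
  simp only [phiR, hochschildDelta, partialR, map_add, map_sub, map_sum, map_zsmul,
    LinearMap.add_apply, LinearMap.sub_apply, LinearMap.smul_apply, Fin.val_zero, if_pos rfl,
    if_true, Fin.tail, Fin.init, Fin.coe_castSucc, Fin.val_succ, Nat.succ_ne_zero, if_false,
    if_neg hlast, smul_sub, apply_ite A, havg1, ht1, ht2, hi1, hi2, hb,
    Finset.sum_sub_distrib]
  rw [hAl2, hAr2]
  abel

end
end

section
/- Let (R, ·, A) be an averaging algebra over a field k and (M, A_M) a bimodule over (R, ·, A). For every n ≥ 1 and every k-multilinear map f : R^n → M, one has Φ_l^{n+1}(δ f) = ∂_l(Φ_l^n f) as multilinear maps R^{n+1} → M. -/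
section

variable {k : Type*} [Field k] {R : Type*} [Ring R] [Algebra k R]
  {M : Type*} [AddCommGroup M] [Module k M]

/-- The differential `∂_l` of the cochain complex `C_l^•(R,M)`. -/
def partialL (A : R → R) (B : M → M) (l : R → M → M) (rr : M → R → M) {n : ℕ}
    (f : (Fin n → R) → M) : (Fin (n + 1) → R) → M := fun x =>
  l (A (x 0)) (f (Fin.tail x))
    + ∑ i : Fin n, ((-1 : ℤ) ^ ((i : ℕ) + 1)) •
        f (fun j => if (j : ℕ) < (i : ℕ) then x (Fin.castSucc j)
            else if (j : ℕ) = (i : ℕ) then A (x (Fin.castSucc i)) * x (Fin.succ i)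
            else x (Fin.succ j))
    + ((-1 : ℤ) ^ (n + 1)) • rr (f (Fin.init x)) (A (x (Fin.last n)))
    + ((-1 : ℤ) ^ n) • B (rr (f (Fin.init x)) (x (Fin.last n)))

/-- The map `Φ_l^n : C^n(R,M) → C_l^n(R,M)`,
`Φ_l^n(f)(x_1,…,x_n) = f(A x_1,…,A x_n) − A_M (f(A x_1,…,A x_{n−1}, x_n))`. -/
def phiL (A : R → R) (B : M → M) {n : ℕ}
    (f : (Fin n → R) → M) : (Fin n → R) → M := fun x =>
  f (fun i => A (x i)) - B (f (fun i => if (i : ℕ) = n - 1 then x i else A (x i)))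

/-- For an averaging algebra `(R, ·, A)`, a bimodule `(M, A_M)` over it,
`n ≥ 1` and a `k`-multilinear map `f : R^n → M`, one has
`Φ_l^{n+1}(δ f) = ∂_l(Φ_l^n f)`. -/
theorem phiL_chain_map
    (A : R →ₗ[k] R) (B : M →ₗ[k] M)
    (l : R →ₗ[k] M →ₗ[k] M) (rr : M →ₗ[k] R →ₗ[k] M)
    -- `(R, ·, A)` is an averaging algebra
    (havg1 : ∀ x y : R, A x * A y = A (x * A y))
    (havg2 : ∀ x y : R, A x * A y = A (A x * y))
    -- `M` is an `R`-bimodule via `l` and `rr`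
    (hbl : ∀ (a b : R) (m : M), l (a * b) m = l a (l b m))
    (hbr : ∀ (a b : R) (m : M), rr m (a * b) = rr (rr m a) b)
    (hblr : ∀ (a b : R) (m : M), rr (l a m) b = l a (rr m b))
    -- `(M, B)` is a bimodule over the averaging algebra `(R, ·, A)`
    (hAl1 : ∀ (r : R) (m : M), l (A r) (B m) = B (l (A r) m))
    (hAl2 : ∀ (r : R) (m : M), l (A r) (B m) = B (l r (B m)))
    (hAr1 : ∀ (r : R) (m : M), rr (B m) (A r) = B (rr (B m) r))
    (hAr2 : ∀ (r : R) (m : M), rr (B m) (A r) = B (rr m (A r)))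
    (n : ℕ) (hn : 1 ≤ n)
    (f : MultilinearMap k (fun _ : Fin n => R) M) :
    ∀ x : Fin (n + 1) → R,
      phiL A B (hochschildDelta (fun a m => l a m) (fun m a => rr m a) (⇑f)) x
        = partialL A B (fun a m => l a m) (fun m a => rr m a)
            (phiL A B (⇑f)) x := by
  intro x
  obtain ⟨m, rfl⟩ : ∃ m, n = m + 1 := ⟨n - 1, by omega⟩
  have h0 : ¬ ((0:ℕ) = m + 1) := by omega
  have ht1 : Fin.tail (fun i : Fin (m+1+1) => A (x i)) = fun i => A (x i.succ) := rfl
  have hi1 : Fin.init (fun i : Fin (m+1+1) => A (x i)) = fun i => A (x i.castSucc) := rfl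
  have ht2 : Fin.tail (fun i : Fin (m+1+1) => if (i:ℕ) = m+1 then x i else A (x i))
      = fun i : Fin (m+1) => if (i:ℕ) = m then x i.succ else A (x i.succ) := by
    funext i
    simp only [Fin.tail, Fin.val_succ]
    split_ifs <;> first | rfl | omega
  have hi2 : Fin.init (fun i : Fin (m+1+1) => if (i:ℕ) = m+1 then x i else A (x i))
      = fun i : Fin (m+1) => A (x i.castSucc) := by
    funext i
    have := i.isLt
    simp only [Fin.init, Fin.coe_castSucc]
    rw [if_neg (by omega)]
  have E2 : ∀ i : Fin (m+1), (fun j : Fin (m+1) =>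
        A (if (j:ℕ) < (i:ℕ) then x j.castSucc
           else if (j:ℕ) = (i:ℕ) then A (x i.castSucc) * x i.succ else x j.succ))
      = fun j : Fin (m+1) => if (j:ℕ) < (i:ℕ) then A (x j.castSucc)
           else if (j:ℕ) = (i:ℕ) then A (x i.castSucc) * A (x i.succ) else A (x j.succ) := by
    intro i; funext j
    by_cases h1 : (j:ℕ) < (i:ℕ)
    · simp [h1]
    · by_cases h2 : (j:ℕ) = (i:ℕ) <;> simp [h1, h2, ← havg2]
  have E3 : ∀ i : Fin (m+1), (fun j : Fin (m+1) =>
        if (j:ℕ) = m then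
          (if (j:ℕ) < (i:ℕ) then x j.castSucc
           else if (j:ℕ) = (i:ℕ) then A (x i.castSucc) * x i.succ else x j.succ)
        else A (if (j:ℕ) < (i:ℕ) then x j.castSucc
           else if (j:ℕ) = (i:ℕ) then A (x i.castSucc) * x i.succ else x j.succ))
      = fun j : Fin (m+1) => if (j:ℕ) < (i:ℕ) then (if (j:ℕ) = m+1 then x j.castSucc else A (x j.castSucc))
           else if (j:ℕ) = (i:ℕ) then
             ((if (i:ℕ) = m+1 then x i.castSucc else A (x i.castSucc)) *
               if (i:ℕ)+1 = m+1 then x i.succ else A (x i.succ))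
           else if (j:ℕ)+1 = m+1 then x j.succ else A (x j.succ) := by
    intro i; funext j
    have hj := j.isLt; have hi := i.isLt
    split_ifs <;> first | rfl | omega | exact (havg2 _ _).symm
  simp only [phiL, hochschildDelta, partialL, Nat.add_sub_cancel, Fin.tail, Fin.init,
    Fin.val_zero, Fin.val_last,
    Fin.val_succ, Fin.coe_castSucc, h0, if_false, if_true, eq_self_iff_true, ite_true, ite_false]
  rw [ht1, hi1, ht2, hi2]
  simp only [map_sub, map_add, map_zsmul, map_sum, LinearMap.sub_apply, smul_sub,
    Finset.sum_sub_distrib, hAl1, hAr1, E2, E3]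
  simp only [pow_succ, mul_neg, mul_one, neg_smul, neg_neg]
  abel

end
end

section
/- Let (R, μ, A) be an averaging algebra over a field k and let (μ_i)_{i≥0} be a family of k-bilinear maps R × R → R with μ_0 = μ and (A_i)_{i≥0} a family of k-linear maps R → R with A_0 = A, such that for every n ≥ 0 and all x, y, z ∈ R: Σ_{i+j=n} μ_i(μ_j(x,y), z) = Σ_{i+j=n} μ_i(x, μ_j(y,z)); Σ_{i+j+k=n} μ_k(A_i(x), A_j(y)) = Σ_{i+j+k=n} A_k(μ_j(A_i(x), y)); and Σ_{i+j+k=n} μ_k(A_i(x), A_j(y)) = Σ_{i+j+k=n} A_k(μ_j(x, A_i(y))) (the conditions for (Σ μ_i t^i, Σ A_i t^i) to be a 1-parameter formal deformation). Then (μ_1, A_1) is a 2-cocycle; explicitly, for all x, y, z ∈ R: (i) x·μ_1(y,z) − μ_1(xy, z) + μ_1(x, yz) − μ_1(x,y)·z = 0; (ii) μ_1(A(x), A(y)) + A(x)·A_1(y) + A_1(x)·A(y) = A_1(A(x)·y) + A(A_1(x)·y) + A(μ_1(A(x), y)); (iii) μ_1(A(x), A(y)) + A(x)·A_1(y) + A_1(x)·A(y)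 = A_1(x·A(y)) + A(x·A_1(y)) + A(μ_1(x, A(y))). -/
/-!
Each deformation equation is the coefficient of `t^n` in an identity of formal power series. At
`t^1` exactly one factor of every summand carries index `1` and all others index `0`; substituting
`μ_0 = μ` and `A_0 = A` turns the three equations into the three cocycle identities.
-/

open Finset

theorem Finset.Nat.sum_antidiagonalTuple_three_one {M : Type*} [AddCommMonoid M]
    (f : (Fin 3 → ℕ) → M) :
    ∑ v ∈ Nat.antidiagonalTuple 3 1, f v = f ![1, 0, 0] + f ![0, 1, 0] + f ![0, 0, 1] := by
  rw [show Nat.antidiagonalTuple 3 1 = {![0, 0, 1], ![0, 1, 0], ![1, 0, 0]} by decide,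
    sum_insert (by decide), sum_pair (by decide)]
  abel

section FirstOrder

variable {R : Type*} [NonUnitalNonAssocRing R] (μ : ℕ → R → R → R) (α : ℕ → R → R)

theorem hochschild_cocycle_of_assoc_coeff_one (hμ0 : ∀ x y, μ 0 x y = x * y)
    (hass : ∀ x y z : R, ∑ p ∈ antidiagonal 1, μ p.1 (μ p.2 x y) z
      = ∑ p ∈ antidiagonal 1, μ p.1 x (μ p.2 y z)) (x y z : R) :
    x * μ 1 y z - μ 1 (x * y) z + μ 1 x (y * z) - μ 1 x y * z = 0 := by
  have h := hass x y z
  simp only [Nat.sum_antidiagonal_succ, Nat.antidiagonal_zero, sum_singleton, hμ0] at h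
  refine Eq.trans ?_ (sub_eq_zero_of_eq h.symm)
  abel

theorem averaging_cocycle_left_of_coeff_one (hμ0 : ∀ x y, μ 0 x y = x * y)
    (hav : ∀ x y : R, ∑ v ∈ Nat.antidiagonalTuple 3 1, μ (v 2) (α (v 0) x) (α (v 1) y)
      = ∑ v ∈ Nat.antidiagonalTuple 3 1, α (v 2) (μ (v 1) (α (v 0) x) y)) (x y : R) :
    μ 1 (α 0 x) (α 0 y) + α 0 x * α 1 y + α 1 x * α 0 y
      = α 1 (α 0 x * y) + α 0 (α 1 x * y) + α 0 (μ 1 (α 0 x) y) := by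
  have h := hav x y
  simp only [Nat.sum_antidiagonalTuple_three_one, Matrix.cons_val, hμ0] at h
  convert h using 1 <;> abel

theorem averaging_cocycle_right_of_coeff_one (hμ0 : ∀ x y, μ 0 x y = x * y)
    (hav : ∀ x y : R, ∑ v ∈ Nat.antidiagonalTuple 3 1, μ (v 2) (α (v 0) x) (α (v 1) y)
      = ∑ v ∈ Nat.antidiagonalTuple 3 1, α (v 2) (μ (v 1) x (α (v 0) y))) (x y : R) :
    μ 1 (α 0 x) (α 0 y) + α 0 x * α 1 y + α 1 x * α 0 y
      = α 1 (x * α 0 y) + α 0 (x * α 1 y) + α 0 (μ 1 x (α 0 y)) := by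
  have h := hav x y
  simp only [Nat.sum_antidiagonalTuple_three_one, Matrix.cons_val, hμ0] at h
  convert h using 1 <;> abel

end FirstOrder

theorem infinitesimal_is_two_cocycle_general
    (k : Type*) [Field k] (R : Type*) [Ring R] [Algebra k R]
    (A : R →ₗ[k] R)
    -- the families of bilinear and linear maps
    (m : ℕ → R →ₗ[k] R →ₗ[k] R) (a : ℕ → R →ₗ[k] R)
    (hm0 : ∀ x y : R, m 0 x y = x * y) (ha0 : a 0 = A)
    -- the deformation equations
    (hass : ∀ (n : ℕ) (x y z : R),
      ∑ p ∈ Finset.HasAntidiagonal.antidiagonal n, m p.1 (m p.2 x y) z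
        = ∑ p ∈ Finset.HasAntidiagonal.antidiagonal n, m p.1 x (m p.2 y z))
    (havl : ∀ (n : ℕ) (x y : R),
      ∑ v ∈ Finset.Nat.antidiagonalTuple 3 n, m (v 2) (a (v 0) x) (a (v 1) y)
        = ∑ v ∈ Finset.Nat.antidiagonalTuple 3 n, a (v 2) (m (v 1) (a (v 0) x) y))
    (havr : ∀ (n : ℕ) (x y : R),
      ∑ v ∈ Finset.Nat.antidiagonalTuple 3 n, m (v 2) (a (v 0) x) (a (v 1) y)
        = ∑ v ∈ Finset.Nat.antidiagonalTuple 3 n, a (v 2) (m (v 1) x (a (v 0) y))) :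
    -- `(μ_1, A_1)` is a 2-cocycle
    (∀ x y z : R, x * m 1 y z - m 1 (x * y) z + m 1 x (y * z) - m 1 x y * z = 0) ∧
    (∀ x y : R, m 1 (A x) (A y) + A x * a 1 y + a 1 x * A y
        = a 1 (A x * y) + A (a 1 x * y) + A (m 1 (A x) y)) ∧
    (∀ x y : R, m 1 (A x) (A y) + A x * a 1 y + a 1 x * A y
        = a 1 (x * A y) + A (x * a 1 y) + A (m 1 x (A y))) := by
  subst ha0
  exact ⟨hochschild_cocycle_of_assoc_coeff_one (fun i x y => m i x y) hm0 (hass 1),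
    averaging_cocycle_left_of_coeff_one (fun i x y => m i x y) (fun i x => a i x) hm0 (havl 1),
    averaging_cocycle_right_of_coeff_one (fun i x y => m i x y) (fun i x => a i x) hm0 (havr 1)⟩

/-- If `(μ_t, A_t)` is a 1-parameter formal deformation of an averaging
algebra `(R, μ, A)`, then the infinitesimal `(μ_1, A_1)` is a 2-cocycle. -/
theorem infinitesimal_is_two_cocycle
    (k : Type*) [Field k] (R : Type*) [Ring R] [Algebra k R]
    (A : R →ₗ[k] R)
    -- `(R, μ, A)` is an averaging algebra
    (havg1 : ∀ x y : R, A x * A y = A (x * A y))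
    (havg2 : ∀ x y : R, A x * A y = A (A x * y))
    -- the families of bilinear and linear maps
    (m : ℕ → R →ₗ[k] R →ₗ[k] R) (a : ℕ → R →ₗ[k] R)
    (hm0 : ∀ x y : R, m 0 x y = x * y) (ha0 : a 0 = A)
    -- the deformation equations
    (hass : ∀ (n : ℕ) (x y z : R),
      ∑ p ∈ Finset.HasAntidiagonal.antidiagonal n, m p.1 (m p.2 x y) z
        = ∑ p ∈ Finset.HasAntidiagonal.antidiagonal n, m p.1 x (m p.2 y z))
    (havl : ∀ (n : ℕ) (x y : R),
      ∑ v ∈ Finset.Nat.antidiagonalTuple 3 n, m (v 2) (a (v 0) x) (a (v 1) y)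
        = ∑ v ∈ Finset.Nat.antidiagonalTuple 3 n, a (v 2) (m (v 1) (a (v 0) x) y))
    (havr : ∀ (n : ℕ) (x y : R),
      ∑ v ∈ Finset.Nat.antidiagonalTuple 3 n, m (v 2) (a (v 0) x) (a (v 1) y)
        = ∑ v ∈ Finset.Nat.antidiagonalTuple 3 n, a (v 2) (m (v 1) x (a (v 0) y))) :
    -- `(μ_1, A_1)` is a 2-cocycle
    (∀ x y z : R, x * m 1 y z - m 1 (x * y) z + m 1 x (y * z) - m 1 x y * z = 0) ∧
    (∀ x y : R, m 1 (A x) (A y) + A x * a 1 y + a 1 x * A y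
        = a 1 (A x * y) + A (a 1 x * y) + A (m 1 (A x) y)) ∧
    (∀ x y : R, m 1 (A x) (A y) + A x * a 1 y + a 1 x * A y
        = a 1 (x * A y) + A (x * a 1 y) + A (m 1 x (A y))) :=
  infinitesimal_is_two_cocycle_general k R A m a hm0 ha0 hass havl havr
end

section
/- Let (R, μ, A) be an averaging algebra over a field k, and let (μ_t, A_t) and (μ'_t, A'_t) be two 1-parameter formal deformations of (R, μ, A), given by families (μ_i), (A_i), (μ'_i), (A'_i) with μ_0 = μ'_0 = μ and A_0 = A'_0 = A. Suppose (φ_i)_{i≥0} is a family of k-linear maps R → R with φ_0 = id such that for every n ≥ 0 and all x, y ∈ R: Σ_{i+j=n} φ_i(μ'_j(x,y)) = Σ_{i+j+k=n} μ_i(φ_j(x), φ_k(y)) and Σ_{i+j=n} φ_i(A'_j(x)) = Σ_{i+j=n} A_i(φ_j(x)) (i.e., φ_t = Σ φ_i t^i is a formal isomorphism). Then for all x, y ∈ R: μ'_1(x,y) = μ_1(x,y) + x·φ_1(y) − φ_1(xy) + φ_1(x)·y, and A'_1(x) = A_1(x) + A(φ_1(x)) − φ_1(A(x)); that is, the infinitesimals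 (μ'_1, A'_1) and (μ_1, A_1) differ by the coboundary of φ_1. -/
/-- The conditions for a pair of families `(μ_i)`, `(A_i)` to define a 1-parameter formal
deformation `(Σ μ_i t^i, Σ A_i t^i)` of an averaging algebra structure on `R[[t]]`. -/
def IsAvgDeformation {k : Type*} [Field k] {R : Type*} [Ring R] [Algebra k R]
    (m : ℕ → R →ₗ[k] R →ₗ[k] R) (a : ℕ → R →ₗ[k] R) : Prop :=
  (∀ (n : ℕ) (x y z : R),
      ∑ p ∈ Finset.HasAntidiagonal.antidiagonal n, m p.1 (m p.2 x y) z
        = ∑ p ∈ Finset.HasAntidiagonal.antidiagonal n, m p.1 x (m p.2 y z)) ∧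
  (∀ (n : ℕ) (x y : R),
      ∑ v ∈ Finset.Nat.antidiagonalTuple 3 n, m (v 2) (a (v 0) x) (a (v 1) y)
        = ∑ v ∈ Finset.Nat.antidiagonalTuple 3 n, a (v 2) (m (v 1) (a (v 0) x) y)) ∧
  (∀ (n : ℕ) (x y : R),
      ∑ v ∈ Finset.Nat.antidiagonalTuple 3 n, m (v 2) (a (v 0) x) (a (v 1) y)
        = ∑ v ∈ Finset.Nat.antidiagonalTuple 3 n, a (v 2) (m (v 1) x (a (v 0) y)))

namespace Finset.Nat

theorem sum_antidiagonal_one {M : Type*} [AddCommMonoid M] (f : ℕ × ℕ → M) :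
    ∑ p ∈ antidiagonal 1, f p = f (0, 1) + f (1, 0) := by
  simp [sum_antidiagonal_succ]

theorem antidiagonalTuple_three_one :
    antidiagonalTuple 3 1 = {![1, 0, 0], ![0, 1, 0], ![0, 0, 1]} := by
  decide

theorem sum_antidiagonalTuple_three_one_s12 {M : Type*} [AddCommMonoid M] (f : (Fin 3 → ℕ) → M) :
    ∑ v ∈ antidiagonalTuple 3 1, f v = f ![1, 0, 0] + f ![0, 1, 0] + f ![0, 0, 1] := by
  rw [antidiagonalTuple_three_one, sum_insert (by decide), sum_insert (by decide),
    sum_singleton, add_assoc]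

end Finset.Nat

open Finset Finset.Nat

section FirstOrder

variable {k : Type*} [CommSemiring k]

theorem unary_coeff_one_eq_of_formal_iso {M : Type*} [AddCommGroup M] [Module k M]
    (φ a a' : ℕ → M →ₗ[k] M) (hφ0 : φ 0 = LinearMap.id) (x : M)
    (h : ∑ p ∈ antidiagonal 1, φ p.1 (a' p.2 x) = ∑ p ∈ antidiagonal 1, a p.1 (φ p.2 x)) :
    a' 1 x = a 1 x + a 0 (φ 1 x) - φ 1 (a' 0 x) := by
  rw [sum_antidiagonal_one, sum_antidiagonal_one] at h
  simp only [hφ0, LinearMap.id_apply] at h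
  rwa [eq_sub_iff_add_eq, add_comm (a 1 x)]

theorem binary_coeff_one_eq_of_formal_iso {M : Type*} [AddCommGroup M] [Module k M]
    (φ : ℕ → M →ₗ[k] M) (m m' : ℕ → M →ₗ[k] M →ₗ[k] M) (hφ0 : φ 0 = LinearMap.id) (x y : M)
    (h : ∑ p ∈ antidiagonal 1, φ p.1 (m' p.2 x y)
      = ∑ v ∈ antidiagonalTuple 3 1, m (v 0) (φ (v 1) x) (φ (v 2) y)) :
    m' 1 x y = m 1 x y + m 0 x (φ 1 y) - φ 1 (m' 0 x y) + m 0 (φ 1 x) y := by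
  rw [sum_antidiagonal_one, sum_antidiagonalTuple_three_one_s12] at h
  simp only [Matrix.cons_val, hφ0, LinearMap.id_apply] at h
  rw [eq_sub_iff_add_eq.mpr h]
  abel

end FirstOrder

theorem equivalent_deformations_infinitesimal_general
    (k : Type*) [Field k] (R : Type*) [Ring R] [Algebra k R]
    (A : R →ₗ[k] R)
    -- two 1-parameter formal deformations of `(R, μ, A)`
    (m m' : ℕ → R →ₗ[k] R →ₗ[k] R) (a a' : ℕ → R →ₗ[k] R)
    (hm0 : ∀ x y : R, m 0 x y = x * y) (hm'0 : ∀ x y : R, m' 0 x y = x * y)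
    (ha0 : a 0 = A) (ha'0 : a' 0 = A)
    -- a formal isomorphism `φ_t : (R[[t]], μ'_t, A'_t) → (R[[t]], μ_t, A_t)`
    (φ : ℕ → R →ₗ[k] R) (hφ0 : φ 0 = LinearMap.id)
    (hiso1 : ∀ (n : ℕ) (x y : R),
      ∑ p ∈ Finset.HasAntidiagonal.antidiagonal n, φ p.1 (m' p.2 x y)
        = ∑ v ∈ Finset.Nat.antidiagonalTuple 3 n, m (v 0) (φ (v 1) x) (φ (v 2) y))
    (hiso2 : ∀ (n : ℕ) (x : R),
      ∑ p ∈ Finset.HasAntidiagonal.antidiagonal n, φ p.1 (a' p.2 x)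
        = ∑ p ∈ Finset.HasAntidiagonal.antidiagonal n, a p.1 (φ p.2 x)) :
    (∀ x y : R, m' 1 x y = m 1 x y + x * φ 1 y - φ 1 (x * y) + φ 1 x * y) ∧
    (∀ x : R, a' 1 x = a 1 x + A (φ 1 x) - φ 1 (A x)) := by
  refine ⟨fun x y => ?_, fun x => ?_⟩
  · simpa only [hm0, hm'0] using
      binary_coeff_one_eq_of_formal_iso φ m m' hφ0 x y (hiso1 1 x y)
  · simpa only [ha0, ha'0] using unary_coeff_one_eq_of_formal_iso φ a a' hφ0 x (hiso2 1 x)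

/-- If `φ_t = Σ φ_i t^i` is a formal isomorphism between two 1-parameter
formal deformations `(μ'_t, A'_t)` and `(μ_t, A_t)` of an averaging algebra `(R, μ, A)`,
then the infinitesimals differ by the coboundary of `φ_1`. -/
theorem equivalent_deformations_infinitesimal
    (k : Type*) [Field k] (R : Type*) [Ring R] [Algebra k R]
    (A : R →ₗ[k] R)
    -- `(R, μ, A)` is an averaging algebra
    (havg1 : ∀ x y : R, A x * A y = A (x * A y))
    (havg2 : ∀ x y : R, A x * A y = A (A x * y))
    -- two 1-parameter formal deformations of `(R, μ, A)`
    (m m' : ℕ → R →ₗ[k] R →ₗ[k] R) (a a' : ℕ → R →ₗ[k] R)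
    (hm0 : ∀ x y : R, m 0 x y = x * y) (hm'0 : ∀ x y : R, m' 0 x y = x * y)
    (ha0 : a 0 = A) (ha'0 : a' 0 = A)
    (hdef : IsAvgDeformation m a) (hdef' : IsAvgDeformation m' a')
    -- a formal isomorphism `φ_t : (R[[t]], μ'_t, A'_t) → (R[[t]], μ_t, A_t)`
    (φ : ℕ → R →ₗ[k] R) (hφ0 : φ 0 = LinearMap.id)
    (hiso1 : ∀ (n : ℕ) (x y : R),
      ∑ p ∈ Finset.HasAntidiagonal.antidiagonal n, φ p.1 (m' p.2 x y)
        = ∑ v ∈ Finset.Nat.antidiagonalTuple 3 n, m (v 0) (φ (v 1) x) (φ (v 2) y))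
    (hiso2 : ∀ (n : ℕ) (x : R),
      ∑ p ∈ Finset.HasAntidiagonal.antidiagonal n, φ p.1 (a' p.2 x)
        = ∑ p ∈ Finset.HasAntidiagonal.antidiagonal n, a p.1 (φ p.2 x)) :
    (∀ x y : R, m' 1 x y = m 1 x y + x * φ 1 y - φ 1 (x * y) + φ 1 x * y) ∧
    (∀ x : R, a' 1 x = a 1 x + A (φ 1 x) - φ 1 (A x)) :=
  equivalent_deformations_infinitesimal_general k R A m m' a a' hm0 hm'0 ha0 ha'0 φ hφ0 hiso1 hiso2
end

section
/- Let (R̂, Â) and (R, A) be averaging algebras over a field k, p : R̂ → R a surjective averaging algebra morphism (an algebra homomorphism with p ∘ Â = A ∘ p), and let M := ker p, which is preserved by Â; write A_M for the restriction of Â to M. Assume uv = 0 for all u, v ∈ M. Let s : R → R̂ be a k-linear section of p (p ∘ s = id_R). Define actions of R on M by r·m := s(r)m and m·r := m s(r) for r ∈ R, m ∈ M (these lie in M). Then (M, A_M) with these actions is a bimodule over the averaging algebra (R, A): the actions make M an R-bimodule, and for all r ∈ R, m ∈ M: A(r)·A_M(m) = A_M(A(r)·m) = A_M(r·A_M(m))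 and A_M(m)·A(r) = A_M(A_M(m)·r) = A_M(m·A(r)). -/
/-- Given an abelian extension `p : (R̂, Â) → (R, A)` with kernel `M`
(on which all products vanish) and a linear section `s` of `p`, the actions
`r·m := s(r)m` and `m·r := m s(r)` make `(M, Â|_M)` a bimodule over the averaging
algebra `(R, A)`. -/
theorem abelian_extension_kernel_bimodule
    (k : Type*) [Field k]
    (S : Type*) [Ring S] [Algebra k S]
    (R : Type*) [Ring R] [Algebra k R]
    (Ahat : S →ₗ[k] S) (A : R →ₗ[k] R)
    -- `(S, Â)` and `(R, A)` are averaging algebras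
    (havgS1 : ∀ x y : S, Ahat x * Ahat y = Ahat (x * Ahat y))
    (havgS2 : ∀ x y : S, Ahat x * Ahat y = Ahat (Ahat x * y))
    (havgR1 : ∀ x y : R, A x * A y = A (x * A y))
    (havgR2 : ∀ x y : R, A x * A y = A (A x * y))
    -- `p` is a surjective morphism of averaging algebras, `M := ker p`
    (p : S →ₐ[k] R) (hps : Function.Surjective p)
    (hpA : ∀ u : S, p (Ahat u) = A (p u))
    -- all products of elements of `M` vanish
    (hM : ∀ u v : S, p u = 0 → p v = 0 → u * v = 0)
    -- a `k`-linear section of `p`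
    (s : R →ₗ[k] S) (hs : ∀ x : R, p (s x) = x) :
    -- the actions `r·m := s(r)·m` and `m·r := m·s(r)` take values in `M := ker p`
    (∀ (r : R) (u : S), p u = 0 → p (s r * u) = 0 ∧ p (u * s r) = 0) ∧
    -- they make `M` an `R`-bimodule
    (∀ (a b : R) (u : S), p u = 0 →
        s (a * b) * u = s a * (s b * u) ∧
        u * s (a * b) = (u * s a) * s b ∧
        (s a * u) * s b = s a * (u * s b)) ∧
    -- and `(M, A_M := Â|_M)` is a bimodule over the averaging algebra `(R, A)`
    (∀ (r : R) (u : S), p u = 0 →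
        s (A r) * Ahat u = Ahat (s (A r) * u) ∧
        s (A r) * Ahat u = Ahat (s r * Ahat u) ∧
        Ahat u * s (A r) = Ahat (Ahat u * s r) ∧
        Ahat u * s (A r) = Ahat (u * s (A r))) := by
  have keyL : ∀ x y u : S, p x = p y → p u = 0 → x * u = y * u := by
    intro x y u hxy hu
    have h0 : (x - y) * u = 0 := hM _ _ (by simp [hxy]) hu
    rw [sub_mul, sub_eq_zero] at h0
    exact h0
  have keyR : ∀ x y u : S, p x = p y → p u = 0 → u * x = u * y := by
    intro x y u hxy hu
    have h0 : u * (x - y) = 0 := hM _ _ hu (by simp [hxy])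
    rw [mul_sub, sub_eq_zero] at h0
    exact h0
  refine ⟨?_, ?_, ?_⟩
  · intro r u hu
    constructor <;> simp [map_mul, hu, hs r]
  · intro a b u hu
    refine ⟨?_, ?_, mul_assoc _ _ _⟩
    · rw [← mul_assoc]
      exact keyL _ _ _ (by simp [hs, map_mul]) hu
    · rw [mul_assoc]
      exact keyR _ _ _ (by simp [hs, map_mul]) hu
  · intro r u hu
    have hAu : p (Ahat u) = 0 := by rw [hpA, hu, map_zero]
    have he : p (s (A r)) = p (Ahat (s r)) := by rw [hs, hpA, hs]
    have h1 : s (A r) * Ahat u = Ahat (s r) * Ahat u := keyL _ _ _ he hAu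
    have h1' : Ahat u * s (A r) = Ahat u * Ahat (s r) := keyR _ _ _ he hAu
    refine ⟨?_, ?_, ?_, ?_⟩
    · rw [h1, havgS2]
      congr 1
      exact (keyL _ _ _ he.symm hu)
    · rw [h1, havgS1]
    · rw [h1', ← havgS2, havgS1]
    · rw [h1', havgS1]
      congr 1
      exact (keyR _ _ _ he.symm hu)
end

section
/- Let (R, ·, A) be an averaging algebra over a field k and (M, A_M) a bimodule over (R, ·, A). Let ψ : R × R → M be a k-bilinear map and χ : R → M a k-linear map. Equip the vector space R ⊕ M with the multiplication (x,m)·_ψ(y,n) := (xy, xn + my + ψ(x,y)) and the operator A_χ(x,m) := (A(x), χ(x) + A_M(m)). Then (R ⊕ M, ·_ψ, A_χ) is an averaging algebra if and only if (ψ, χ) is a 2-cocycle, i.e., for all x, y, z ∈ R: (i) x·ψ(y,z) − ψ(xy,z) + ψ(x,yz) − ψ(x,y)·z = 0; (ii) ψ(A(x),A(y)) − A_M(ψ(A(x),y)) + A(x)·χ(y) − A_M(χ(x)·y) − χ(A(x)y) + χ(x)·A(y) = 0; (iii) ψ(A(x),A(y)) − A_M(ψ(x,A(y))) + A(x)·χ(y)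 − A_M(x·χ(y)) − χ(xA(y)) + χ(x)·A(y) = 0. -/
/-- For an averaging algebra `(R, ·, A)`, a bimodule `(M, A_M)` over it,
a bilinear `ψ : R × R → M` and a linear `χ : R → M`, the space `R ⊕ M` with
multiplication `(x,m)·_ψ(y,n) = (xy, xn + my + ψ(x,y))` and operator
`A_χ(x,m) = (A x, χ(x) + A_M m)` is an averaging algebra iff `(ψ, χ)` is a 2-cocycle. -/
theorem extension_averaging_iff_two_cocycle
    (k : Type*) [Field k] (R : Type*) [Ring R] [Algebra k R]
    (M : Type*) [AddCommGroup M] [Module k M]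
    (A : R →ₗ[k] R) (B : M →ₗ[k] M)
    (l : R →ₗ[k] M →ₗ[k] M) (rr : M →ₗ[k] R →ₗ[k] M)
    -- `(R, ·, A)` is an averaging algebra
    (havg1 : ∀ x y : R, A x * A y = A (x * A y))
    (havg2 : ∀ x y : R, A x * A y = A (A x * y))
    -- `M` is an `R`-bimodule via `l` and `rr`
    (hbl : ∀ (a b : R) (m : M), l (a * b) m = l a (l b m))
    (hbr : ∀ (a b : R) (m : M), rr m (a * b) = rr (rr m a) b)
    (hblr : ∀ (a b : R) (m : M), rr (l a m) b = l a (rr m b))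
    -- `(M, B)` is a bimodule over the averaging algebra `(R, ·, A)`
    (hAl1 : ∀ (r : R) (m : M), l (A r) (B m) = B (l (A r) m))
    (hAl2 : ∀ (r : R) (m : M), l (A r) (B m) = B (l r (B m)))
    (hAr1 : ∀ (r : R) (m : M), rr (B m) (A r) = B (rr (B m) r))
    (hAr2 : ∀ (r : R) (m : M), rr (B m) (A r) = B (rr m (A r)))
    -- the data `(ψ, χ)` and the structure maps on `R ⊕ M`
    (ψ : R →ₗ[k] R →ₗ[k] M) (χ : R →ₗ[k] M)
    (mul : R × M → R × M → R × M)
    (hmul : ∀ p q, mul p q = (p.1 * q.1, l p.1 q.2 + rr p.2 q.1 + ψ p.1 q.1))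
    (Aop : R × M → R × M)
    (hAop : ∀ p, Aop p = (A p.1, χ p.1 + B p.2)) :
    -- `(R ⊕ M, ·_ψ, A_χ)` is an averaging algebra
    ((∀ p q s, mul (mul p q) s = mul p (mul q s)) ∧
     (∀ p q, mul (Aop p) (Aop q) = Aop (mul p (Aop q)) ∧
             mul (Aop p) (Aop q) = Aop (mul (Aop p) q)))
    ↔
    -- iff `(ψ, χ)` is a 2-cocycle
    ((∀ x y z : R, l x (ψ y z) - ψ (x * y) z + ψ x (y * z) - rr (ψ x y) z = 0) ∧
     (∀ x y : R, ψ (A x) (A y) - B (ψ (A x) y) + l (A x) (χ y)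
        - B (rr (χ x) y) - χ (A x * y) + rr (χ x) (A y) = 0) ∧
     (∀ x y : R, ψ (A x) (A y) - B (ψ x (A y)) + l (A x) (χ y)
        - B (l x (χ y)) - χ (x * A y) + rr (χ x) (A y) = 0)) := by
  constructor
  · rintro ⟨hassoc, havgp⟩
    refine ⟨?_, ?_, ?_⟩
    · intro x y z
      have h := (hassoc (x, 0) (y, 0) (z, 0))
      simp only [hmul, Prod.mk.injEq, map_zero, add_zero, zero_add,
        LinearMap.zero_apply, LinearMap.map_zero] at h
      have e := h.2
      rw [← sub_eq_zero] at e
      rw [← neg_eq_zero, ← e]; abel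
    · intro x y
      have h := (havgp (x, 0) (y, 0)).2
      simp only [hmul, hAop, Prod.mk.injEq, map_zero, map_add, add_zero, zero_add,
        LinearMap.zero_apply, LinearMap.map_zero, LinearMap.add_apply] at h
      have e := h.2
      rw [← sub_eq_zero] at e
      rw [← e]; abel
    · intro x y
      have h := (havgp (x, 0) (y, 0)).1
      simp only [hmul, hAop, Prod.mk.injEq, map_zero, map_add, add_zero, zero_add,
        LinearMap.zero_apply, LinearMap.map_zero, LinearMap.add_apply] at h
      have e := h.2
      rw [← sub_eq_zero] at e
      rw [← e]; abel
  · rintro ⟨h1, h2, h3⟩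
    constructor
    · intro p q s
      simp only [hmul, Prod.mk.injEq, map_add, LinearMap.add_apply, hbl, hbr, hblr]
      refine ⟨mul_assoc _ _ _, ?_⟩
      rw [← sub_eq_zero]
      have e := h1 p.1 q.1 s.1
      rw [← neg_eq_zero, ← e]; abel
    · intro p q
      constructor
      · simp only [hmul, hAop, Prod.mk.injEq, map_add, LinearMap.add_apply,
          hAl2, hAr2]
        refine ⟨havg1 _ _, ?_⟩
        rw [← sub_eq_zero]
        have e := h3 p.1 q.1
        rw [← e]; abel
      · simp only [hmul, hAop, Prod.mk.injEq, map_add, LinearMap.add_apply,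
          hAl1, hAr1]
        refine ⟨havg2 _ _, ?_⟩
        rw [← sub_eq_zero]
        have e := h2 p.1 q.1
        rw [← e]; abel
end

section
/- Let (R, ·, A) be an averaging algebra over a field k, (M, A_M) a bimodule over (R, ·, A), and let (ψ_1, χ_1) and (ψ_2, χ_2) be two 2-cocycles (bilinear ψ_i : R × R → M and linear χ_i : R → M satisfying the 2-cocycle identities) such that there is a k-linear map γ : R → M with ψ_1(x,y) = ψ_2(x,y) + x·γ(y) − γ(xy) + γ(x)·y and χ_1(x) = χ_2(x) + A_M(γ(x)) − γ(A(x)) for all x, y ∈ R. Then the map ζ : R ⊕ M → R ⊕ M defined by ζ(r,m) := (r, γ(r) + m) is an isomorphism of averaging algebras from (R ⊕ M, ·_{ψ_1}, A_{χ_1}) to (R ⊕ M, ·_{ψ_2}, A_{χ_2}): ζ is bijective, ζ((x,m)·_{ψ_1}(y,n)) = ζ(x,m)·_{ψ_2}ζ(y,n) for all x, y ∈ R, m, n ∈ M, and ζ ∘ A_{χ_1} = A_{χ_2} ∘ ζ. -/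
/-- If two 2-cocycles `(ψ_1, χ_1)` and `(ψ_2, χ_2)` of an averaging
algebra `(R, ·, A)` with coefficients in a bimodule `(M, A_M)` differ by the coboundary
of a linear map `γ : R → M`, then `ζ(r, m) := (r, γ(r) + m)` is an isomorphism of
averaging algebras `(R ⊕ M, ·_{ψ_1}, A_{χ_1}) → (R ⊕ M, ·_{ψ_2}, A_{χ_2})`. -/
theorem cohomologous_cocycles_isomorphic_extensions
    (k : Type*) [Field k] (R : Type*) [Ring R] [Algebra k R]
    (M : Type*) [AddCommGroup M] [Module k M]
    (A : R →ₗ[k] R) (B : M →ₗ[k] M)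
    (l : R →ₗ[k] M →ₗ[k] M) (rr : M →ₗ[k] R →ₗ[k] M)
    -- `(R, ·, A)` is an averaging algebra
    (havg1 : ∀ x y : R, A x * A y = A (x * A y))
    (havg2 : ∀ x y : R, A x * A y = A (A x * y))
    -- `M` is an `R`-bimodule via `l` and `rr`
    (hbl : ∀ (a b : R) (m : M), l (a * b) m = l a (l b m))
    (hbr : ∀ (a b : R) (m : M), rr m (a * b) = rr (rr m a) b)
    (hblr : ∀ (a b : R) (m : M), rr (l a m) b = l a (rr m b))
    -- `(M, B)` is a bimodule over the averaging algebra `(R, ·, A)`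
    (hAl1 : ∀ (r : R) (m : M), l (A r) (B m) = B (l (A r) m))
    (hAl2 : ∀ (r : R) (m : M), l (A r) (B m) = B (l r (B m)))
    (hAr1 : ∀ (r : R) (m : M), rr (B m) (A r) = B (rr (B m) r))
    (hAr2 : ∀ (r : R) (m : M), rr (B m) (A r) = B (rr m (A r)))
    -- the two 2-cocycles
    (ψ₁ ψ₂ : R →ₗ[k] R →ₗ[k] M) (χ₁ χ₂ : R →ₗ[k] M)
    (hcoc₁ :
      (∀ x y z : R, l x (ψ₁ y z) - ψ₁ (x * y) z + ψ₁ x (y * z) - rr (ψ₁ x y) z = 0) ∧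
      (∀ x y : R, ψ₁ (A x) (A y) - B (ψ₁ (A x) y) + l (A x) (χ₁ y)
          - B (rr (χ₁ x) y) - χ₁ (A x * y) + rr (χ₁ x) (A y) = 0) ∧
      (∀ x y : R, ψ₁ (A x) (A y) - B (ψ₁ x (A y)) + l (A x) (χ₁ y)
          - B (l x (χ₁ y)) - χ₁ (x * A y) + rr (χ₁ x) (A y) = 0))
    (hcoc₂ :
      (∀ x y z : R, l x (ψ₂ y z) - ψ₂ (x * y) z + ψ₂ x (y * z) - rr (ψ₂ x y) z = 0) ∧
      (∀ x y : R, ψ₂ (A x) (A y) - B (ψ₂ (A x) y) + l (A x) (χ₂ y)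
          - B (rr (χ₂ x) y) - χ₂ (A x * y) + rr (χ₂ x) (A y) = 0) ∧
      (∀ x y : R, ψ₂ (A x) (A y) - B (ψ₂ x (A y)) + l (A x) (χ₂ y)
          - B (l x (χ₂ y)) - χ₂ (x * A y) + rr (χ₂ x) (A y) = 0))
    -- they differ by the coboundary of `γ`
    (γ : R →ₗ[k] M)
    (hγψ : ∀ x y : R, ψ₁ x y = ψ₂ x y + l x (γ y) - γ (x * y) + rr (γ x) y)
    (hγχ : ∀ x : R, χ₁ x = χ₂ x + B (γ x) - γ (A x))
    -- the two extension structures on `R ⊕ M` and the map `ζ`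
    (mul₁ mul₂ : R × M → R × M → R × M)
    (hmul₁ : ∀ p q, mul₁ p q = (p.1 * q.1, l p.1 q.2 + rr p.2 q.1 + ψ₁ p.1 q.1))
    (hmul₂ : ∀ p q, mul₂ p q = (p.1 * q.1, l p.1 q.2 + rr p.2 q.1 + ψ₂ p.1 q.1))
    (Aop₁ Aop₂ : R × M → R × M)
    (hAop₁ : ∀ p, Aop₁ p = (A p.1, χ₁ p.1 + B p.2))
    (hAop₂ : ∀ p, Aop₂ p = (A p.1, χ₂ p.1 + B p.2))
    (ζ : R × M → R × M)
    (hζ : ∀ p, ζ p = (p.1, γ p.1 + p.2)) :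
    Function.Bijective ζ ∧
    (∀ p q, ζ (mul₁ p q) = mul₂ (ζ p) (ζ q)) ∧
    (∀ p, ζ (Aop₁ p) = Aop₂ (ζ p)) := by
  refine ⟨?_, ?_, ?_⟩
  · have : Function.LeftInverse (fun p : R × M => (p.1, p.2 - γ p.1)) ζ := by
      intro p; simp [hζ]
    refine Function.bijective_iff_has_inverse.2 ⟨_, this, fun p => ?_⟩
    simp [hζ]
  · intro p q
    simp only [hζ, hmul₁, hmul₂, hγψ]
    ext
    · rfl
    · simp only [map_add, LinearMap.add_apply]
      abel
  · intro p
    simp only [hζ, hAop₁, hAop₂, hγχ]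
    ext
    · rfl
    · simp only [map_add, LinearMap.add_apply]
      abel
end

section
/- Let (R̂, Â) and (R, A) be averaging algebras over a field k, p : R̂ → R a surjective averaging algebra morphism with M := ker p satisfying uv = 0 for all u, v ∈ M, and Â(M) ⊆ M. Let s_1, s_2 : R → R̂ be two k-linear sections of p, and define γ := s_1 − s_2 (which takes values in M) and, for j = 1, 2, the maps ψ_j(x,y) := s_j(x)s_j(y) − s_j(xy) and χ_j(x) := Â(s_j(x)) − s_j(A(x)) (all taking values in M). Then for all x, y ∈ R: ψ_1(x,y) = ψ_2(x,y) + s_2(x)γ(y) + γ(x)s_2(y) − γ(xy) and χ_1(x) = χ_2(x) + Â(γ(x)) − γ(A(x)); that is, the 2-cocycles obtained from two sections differ by the coboundary of γ, so the cohomology class of (ψ, χ) does not depend on the choice of section. -/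
/-- For an abelian extension `p : (R̂, Â) → (R, A)` with kernel `M`
(on which all products vanish), the 2-cocycles `(ψ_j, χ_j)` associated to two linear
sections `s_1, s_2` of `p` differ by the coboundary of `γ := s_1 − s_2`. -/
theorem cocycle_independent_of_section
    (k : Type*) [Field k]
    (S : Type*) [Ring S] [Algebra k S]
    (R : Type*) [Ring R] [Algebra k R]
    (Ahat : S →ₗ[k] S) (A : R →ₗ[k] R)
    -- `(S, Â)` and `(R, A)` are averaging algebras
    (havgS1 : ∀ x y : S, Ahat x * Ahat y = Ahat (x * Ahat y))
    (havgS2 : ∀ x y : S, Ahat x * Ahat y = Ahat (Ahat x * y))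
    (havgR1 : ∀ x y : R, A x * A y = A (x * A y))
    (havgR2 : ∀ x y : R, A x * A y = A (A x * y))
    -- `p` is a surjective morphism of averaging algebras with kernel `M`
    (p : S →ₐ[k] R) (hps : Function.Surjective p)
    (hpA : ∀ u : S, p (Ahat u) = A (p u))
    -- all products of elements of `M` vanish
    (hM : ∀ u v : S, p u = 0 → p v = 0 → u * v = 0)
    -- two `k`-linear sections of `p`
    (s₁ s₂ : R →ₗ[k] S) (hs₁ : ∀ x : R, p (s₁ x) = x) (hs₂ : ∀ x : R, p (s₂ x) = x)
    -- `γ := s₁ − s₂` and the associated 2-cocycles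
    (γ : R → S) (hγ : ∀ x, γ x = s₁ x - s₂ x)
    (ψ₁ ψ₂ : R → R → S)
    (hψ₁ : ∀ x y, ψ₁ x y = s₁ x * s₁ y - s₁ (x * y))
    (hψ₂ : ∀ x y, ψ₂ x y = s₂ x * s₂ y - s₂ (x * y))
    (χ₁ χ₂ : R → S)
    (hχ₁ : ∀ x, χ₁ x = Ahat (s₁ x) - s₁ (A x))
    (hχ₂ : ∀ x, χ₂ x = Ahat (s₂ x) - s₂ (A x)) :
    (∀ x y : R, ψ₁ x y = ψ₂ x y + s₂ x * γ y + γ x * s₂ y - γ (x * y)) ∧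
    (∀ x : R, χ₁ x = χ₂ x + Ahat (γ x) - γ (A x)) := by
  have hγ0 : ∀ x, p (γ x) = 0 := by
    intro x; rw [hγ, map_sub, hs₁, hs₂, sub_self]
  constructor
  · intro x y
    have h0 : γ x * γ y = 0 := hM _ _ (hγ0 x) (hγ0 y)
    have h1 : s₁ x = s₂ x + γ x := by rw [hγ]; abel
    have h1' : s₁ y = s₂ y + γ y := by rw [hγ]; abel
    rw [hψ₁, hψ₂, h1, h1', hγ (x*y), add_mul, mul_add, mul_add, h0, add_zero]
    abel
  · intro x
    rw [hχ₁, hχ₂, hγ, hγ, map_sub]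
    abel
end
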